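/- For formulas φ_1,…,φ_n, ψ of arrow update model logic and any agent a, the equivalence ⟨↑⟩(⋀_{i=1}^n ◇_a φ_i ∧ □_a ψ) ↔ ⋀_{i=1}^n ◇_a⟨↑⟩(φ_i ∧ ψ) is valid. -/

import Mathlib

namespace AAUML

/-- Formulas of arbitrary arrow update model logic over atoms `P` and agents `A`.
An arrow update model is encoded as a finite list of arrows
`(agent, source outcome, source condition, target outcome, target condition)`,
with outcomes drawn from `ℕ`; `upd U o φ` is `[U,o]φ` and `all φ` is `[↑]φ`. -/
inductive Form (P A : Type) : Type where
  | atom : P → Form P A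
  | neg  : Form P A → Form P A
  | and  : Form P A → Form P A → Form P A
  | box  : A → Form P A → Form P A
  | upd  : List (A × ℕ × Form P A × ℕ × Form P A) → ℕ → Form P A → Form P A
  | all  : Form P A → Form P A

/-- An arrow: agent, source outcome, source condition, target outcome, target condition. -/
abbrev Arrow (P A : Type) := A × ℕ × Form P A × ℕ × Form P A

/-- Formulas of basic multi-agent modal logic: no update modality, no quantifier. -/
inductive Form.Modal {P A : Type} : Form P A → Prop
  | atom (p : P) : Form.Modal (.atom p)
  | neg {φ : Form P A} : Form.Modal φ → Form.Modal (.neg φ)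
  | and {φ ψ : Form P A} : Form.Modal φ → Form.Modal ψ → Form.Modal (.and φ ψ)
  | box (a : A) {φ : Form P A} : Form.Modal φ → Form.Modal (.box a φ)

/-- Formulas of arrow update model logic (no arbitrary-update quantifier anywhere,
including inside the conditions of arrow update models). -/
inductive Form.NoQuant {P A : Type} : Form P A → Prop
  | atom (p : P) : Form.NoQuant (.atom p)
  | neg {φ : Form P A} : Form.NoQuant φ → Form.NoQuant (.neg φ)
  | and {φ ψ : Form P A} : Form.NoQuant φ → Form.NoQuant ψ → Form.NoQuant (.and φ ψ)
  | box (a : A) {φ : Form P A} : Form.NoQuant φ → Form.NoQuant (.box a φ)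
  | upd {U : List (Arrow P A)} (o : ℕ) {φ : Form P A} : Form.NoQuant φ →
      (∀ ar ∈ U, Form.NoQuant ar.2.2.1) → (∀ ar ∈ U, Form.NoQuant ar.2.2.2.2) →
      Form.NoQuant (.upd U o φ)

/-- Propositional formulas (no modalities at all). -/
inductive Form.Prp {P A : Type} : Form P A → Prop
  | atom (p : P) : Form.Prp (.atom p)
  | neg {φ : Form P A} : Form.Prp φ → Form.Prp (.neg φ)
  | and {φ ψ : Form P A} : Form.Prp φ → Form.Prp ψ → Form.Prp (.and φ ψ)

/-- A relational (Kripke) model. -/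
structure KModel (P A : Type) : Type 1 where
  World : Type
  R : A → World → World → Prop
  V : World → P → Prop

variable {P A : Type}

/-- Satisfaction for basic modal formulas (junk value `False` on updates/quantifiers;
only used on modal formulas). -/
def msat (M : KModel P A) : M.World → Form P A → Prop
  | s, .atom p => M.V s p
  | s, .neg φ => ¬ msat M s φ
  | s, .and φ ψ => msat M s φ ∧ msat M s ψ
  | s, .box a φ => ∀ t, M.R a s t → msat M t φ
  | _, .upd _ _ _ => False
  | _, .all _ => False

/-- Some arrow of `U` for agent `a` from outcome `o` to outcome `o'` has its (modal)
source condition true at `s` and its target condition true at `s'`. -/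
def marrowOK (M : KModel P A) (U : List (Arrow P A)) (a : A) (o o' : ℕ)
    (s s' : M.World) : Prop :=
  ∃ ψ ψ', (a, o, ψ, o', ψ') ∈ U ∧ msat M s ψ ∧ msat M s' ψ'

/-- All source and target conditions of `U` are basic modal formulas. -/
def ModalArrows (U : List (Arrow P A)) : Prop :=
  ∀ ar ∈ U, Form.Modal ar.2.2.1 ∧ Form.Modal ar.2.2.2.2

mutual
  /-- Satisfaction `M,s ⊨ φ`.  The case `upd U o φ` is interpreted in the product
  model `M*U` (inlined); `all φ` quantifies over all arrow update models with basic
  modal source and target conditions. -/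
  def Form.sat : (M : KModel P A) → M.World → Form P A → Prop
    | M, s, .atom p => M.V s p
    | M, s, .neg φ => ¬ Form.sat M s φ
    | M, s, .and φ ψ => Form.sat M s φ ∧ Form.sat M s ψ
    | M, s, .box a φ => ∀ t, M.R a s t → Form.sat M t φ
    | M, s, .upd U o φ =>
        Form.sat ⟨M.World × ℕ,
          fun a x y => M.R a x.1 y.1 ∧ satList M U a x.2 y.2 x.1 y.1,
          fun x p => M.V x.1 p⟩ (s, o) φ
    | M, s, .all φ => ∀ (U : List (Arrow P A)) (o : ℕ), ModalArrows U →
        Form.sat ⟨M.World × ℕ,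
          fun a x y => M.R a x.1 y.1 ∧ marrowOK M U a x.2 y.2 x.1 y.1,
          fun x p => M.V x.1 p⟩ (s, o) φ
  termination_by M s φ => sizeOf φ

  /-- Some arrow of the list, for agent `a`, from `o` to `o'`, has its source condition
  true at `s` and its target condition true at `s'`. -/
  def satList : (M : KModel P A) → List (Arrow P A) → A → ℕ → ℕ → M.World → M.World → Prop
    | _, [], _, _, _, _, _ => False
    | M, (b, o1, ψ, o2, ψ') :: rest, a, o, o', s, s' =>
        (b = a ∧ o1 = o ∧ o2 = o' ∧ Form.sat M s ψ ∧ Form.sat M s' ψ') ∨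
        satList M rest a o o' s s'
  termination_by M U a o o' s s' => sizeOf U
end

/-- The product `M*U` of a relational model and an arrow update model. -/
def prodModel (M : KModel P A) (U : List (Arrow P A)) : KModel P A :=
  ⟨M.World × ℕ,
   fun a x y => M.R a x.1 y.1 ∧ satList M U a x.2 y.2 x.1 y.1,
   fun x p => M.V x.1 p⟩

def Valid (φ : Form P A) : Prop := ∀ (M : KModel P A) (s : M.World), Form.sat M s φ

def Form.or (φ ψ : Form P A) : Form P A := .neg (.and (.neg φ) (.neg ψ))
def Form.imp (φ ψ : Form P A) : Form P A := .neg (.and φ (.neg ψ))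
def Form.dia (a : A) (φ : Form P A) : Form P A := .neg (.box a (.neg φ))
/-- `⟨U,o⟩φ` -/
def Form.diaUpd (U : List (Arrow P A)) (o : ℕ) (φ : Form P A) : Form P A :=
  .neg (.upd U o (.neg φ))
/-- `⟨↑⟩φ` -/
def Form.ex (φ : Form P A) : Form P A := .neg (.all (.neg φ))
/-- A canonical tautology. -/
def Form.top [Inhabited P] : Form P A := .neg (.and (.atom default) (.neg (.atom default)))
/-- Finite conjunction. -/
def Form.conj [Inhabited P] : List (Form P A) → Form P A
  | [] => Form.top
  | φ :: rest => .and φ (Form.conj rest)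

/-- `Z` is a bisimulation between `M` and `N`. -/
def IsBisim (M N : KModel P A) (Z : M.World → N.World → Prop) : Prop :=
  ∀ s s', Z s s' →
    (∀ p, M.V s p ↔ N.V s' p) ∧
    (∀ a t, M.R a s t → ∃ t', N.R a s' t' ∧ Z t t') ∧
    (∀ a t', N.R a s' t' → ∃ t, M.R a s t ∧ Z t t')

/-- Bisimilarity of pointed models. -/
def Bisimilar (M : KModel P A) (s : M.World) (N : KModel P A) (s' : N.World) : Prop :=
  ∃ Z, IsBisim M N Z ∧ Z s s'

/-- An action model: actions with accessibility relations and preconditions. -/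
structure AModel (P A : Type) : Type 1 where
  Action : Type
  rel : A → Action → Action → Prop
  pre : Action → Form P A

/-- The restricted modal product `M ⊗ E`. -/
def actProd (M : KModel P A) (E : AModel P A) : KModel P A :=
  ⟨{x : M.World × E.Action // Form.sat M x.1 (E.pre x.2)},
   fun a x y => M.R a x.1.1 y.1.1 ∧ E.rel a x.1.2 y.1.2,
   fun x p => M.V x.1.1 p⟩

/-- `M,s ⊨ [E,e]φ`: if the precondition of `e` holds at `s` then `φ` holds at `(s,e)`
in `M ⊗ E`. -/
def actSat (M : KModel P A) (E : AModel P A) (s : M.World) (e : E.Action)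
    (φ : Form P A) : Prop :=
  ∀ h : Form.sat M s (E.pre e), Form.sat (actProd M E) ⟨(s, e), h⟩ φ

/-!
Left to right, an `a`-successor of the updated world witnessing `◇_a φᵢ` projects to an
`a`-successor of `s`, where the same update witnesses `⟨↑⟩(φᵢ ∧ ψ)`.

Right to left, pick for each `i` an `a`-successor `tᵢ` and an update `(Uᵢ, oᵢ)` making `φᵢ ∧ ψ`
true there. As arrow update model logic reduces to modal logic, `⟨Uᵢ,oᵢ⟩(φᵢ ∧ ψ)` is equivalent
to a modal formula `θᵢ`. The disjoint union of the `Uᵢ` with a new root `o` and arrows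
`(o, ⊤) →_a (oᵢ, θᵢ)` is a single witness: the `a`-successors of the root are the worlds where
some `θᵢ` holds, paired with `oᵢ`, and the copy of `Uᵢ` inside the union is bisimilar to `Uᵢ`,
so it does not change the truth of the quantifier-free `φᵢ` and `ψ`.
-/

section Semantics
variable {M : KModel P A} {s : M.World} {φ χ : Form P A} {a : A}

/-- The product `M*U` over which `[↑]` quantifies: arrow conditions are read with `msat`. -/
abbrev mprodModel (M : KModel P A) (U : List (Arrow P A)) : KModel P A :=
  ⟨M.World × ℕ,
   fun a x y => M.R a x.1 y.1 ∧ marrowOK M U a x.2 y.2 x.1 y.1,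
   fun x p => M.V x.1 p⟩

@[simp] lemma sat_neg : Form.sat M s (.neg φ) ↔ ¬ Form.sat M s φ := by
  rw [Form.sat]

@[simp] lemma sat_and : Form.sat M s (.and φ χ) ↔ Form.sat M s φ ∧ Form.sat M s χ := by
  rw [Form.sat]

@[simp] lemma sat_box : Form.sat M s (.box a φ) ↔ ∀ t, M.R a s t → Form.sat M t φ := by
  rw [Form.sat]

lemma sat_all :
    Form.sat M s (.all φ) ↔ ∀ U o, ModalArrows U → Form.sat (mprodModel M U) (s, o) φ := by
  rw [Form.sat]

lemma sat_dia : Form.sat M s (Form.dia a φ) ↔ ∃ t, M.R a s t ∧ Form.sat M t φ := by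
  simp [Form.dia]

lemma sat_ex :
    Form.sat M s (Form.ex φ) ↔ ∃ U o, ModalArrows U ∧ Form.sat (mprodModel M U) (s, o) φ := by
  simp [Form.ex, sat_all]

lemma sat_conj [Inhabited P] {l : List (Form P A)} :
    Form.sat M s (Form.conj l) ↔ ∀ χ ∈ l, Form.sat M s χ := by
  induction l with
  | nil => simp [Form.conj, Form.top, Form.sat]
  | cons φ l ih => simp [Form.conj, ih]

@[simp] lemma msat_top [Inhabited P] : msat M s (Form.top : Form P A) := by
  simp [Form.top, msat]

lemma msat_imp : msat M s (Form.imp φ χ) ↔ (msat M s φ → msat M s χ) := by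
  simp only [Form.imp, msat]
  tauto

lemma msat_conj [Inhabited P] {l : List (Form P A)} :
    msat M s (Form.conj l) ↔ ∀ χ ∈ l, msat M s χ := by
  induction l with
  | nil => simp [Form.conj]
  | cons φ l ih => simp [Form.conj, msat, ih]

lemma Form.modal_top [Inhabited P] : (Form.top : Form P A).Modal :=
  .neg (.and (.atom _) (.neg (.atom _)))

lemma Form.modal_imp (hφ : φ.Modal) (hχ : χ.Modal) : (Form.imp φ χ).Modal :=
  .neg (.and hφ (.neg hχ))

lemma Form.modal_conj [Inhabited P] {l : List (Form P A)} (h : ∀ χ ∈ l, χ.Modal) :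
    (Form.conj l).Modal := by
  induction l with
  | nil => exact Form.modal_top
  | cons φ l ih => exact .and (h φ (by simp)) (ih fun χ hχ => h χ (by simp [hχ]))

lemma Form.Modal.msat_iff_of_isBisim {N : KModel P A} {Z : M.World → N.World → Prop}
    (hφ : φ.Modal) (hZ : IsBisim M N Z) {s' : N.World} (hs : Z s s') :
    msat M s φ ↔ msat N s' φ := by
  induction hφ generalizing s s' with
  | atom p => exact (hZ s s' hs).1 p
  | neg _ ih => simp only [msat, ih hs]
  | and _ _ ih₁ ih₂ => simp only [msat, ih₁ hs, ih₂ hs]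
  | box a _ ih =>
    simp only [msat]
    constructor
    · intro H t' hR
      obtain ⟨t, hRt, hz⟩ := (hZ s s' hs).2.2 a t' hR
      exact (ih hz).mp (H t hRt)
    · intro H t hR
      obtain ⟨t', hRt, hz⟩ := (hZ s s' hs).2.1 a t hR
      exact (ih hz).mpr (H t' hRt)

end Semantics

section Reduction
variable {M : KModel P A} {φ : Form P A} {U : List (Arrow P A)}

def ModallyDefinable (φ : Form P A) : Prop :=
  ∃ χ : Form P A, χ.Modal ∧ ∀ (M : KModel P A) (s : M.World), Form.sat M s φ ↔ msat M s χ

lemma exists_modalArrows_satList_iff_marrowOK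
    (h : ∀ ar ∈ U, ModallyDefinable ar.2.2.1 ∧ ModallyDefinable ar.2.2.2.2) :
    ∃ U', ModalArrows U' ∧ ∀ (M : KModel P A) a o o' (s t : M.World),
      satList M U a o o' s t ↔ marrowOK M U' a o o' s t := by
  induction U with
  | nil => exact ⟨[], by simp [ModalArrows], fun M a o o' s t => by simp [satList, marrowOK]⟩
  | cons ar U ih =>
    obtain ⟨b, o₁, χ₁, o₂, χ₂⟩ := ar
    obtain ⟨⟨ξ₁, hξ₁, h₁⟩, ⟨ξ₂, hξ₂, h₂⟩⟩ := h _ List.mem_cons_self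
    obtain ⟨U', hU', hiff⟩ := ih fun ar har => h ar (List.mem_cons_of_mem _ har)
    refine ⟨(b, o₁, ξ₁, o₂, ξ₂) :: U', ?_, fun M a o o' s t => ?_⟩
    · simpa [ModalArrows, hξ₁, hξ₂] using hU'
    · rw [satList, hiff, h₁, h₂]
      simp only [marrowOK, List.mem_cons, Prod.mk.injEq]
      constructor
      · rintro (⟨rfl, rfl, rfl, hs, ht⟩ | ⟨ψ, ψ', hmem, hs, ht⟩)
        exacts [⟨ξ₁, ξ₂, .inl ⟨rfl, rfl, rfl, rfl, rfl⟩, hs, ht⟩, ⟨ψ, ψ', .inr hmem, hs, ht⟩]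
      · rintro ⟨ψ, ψ', ⟨rfl, rfl, rfl, rfl, rfl⟩ | hmem, hs, ht⟩
        exacts [.inl ⟨rfl, rfl, rfl, hs, ht⟩, .inr ⟨ψ, ψ', hmem, hs, ht⟩]

lemma sat_upd_iff_of_satList_iff {U' : List (Arrow P A)} {o : ℕ} {s : M.World}
    (h : ∀ a o o' (s t : M.World), satList M U a o o' s t ↔ marrowOK M U' a o o' s t) :
    Form.sat M s (.upd U o φ) ↔ Form.sat (mprodModel M U') (s, o) φ := by
  have hR : (fun a (x y : M.World × ℕ) => M.R a x.1 y.1 ∧ satList M U a x.2 y.2 x.1 y.1) =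
      fun a x y => M.R a x.1 y.1 ∧ marrowOK M U' a x.2 y.2 x.1 y.1 := by
    simp only [h]
  rw [Form.sat, hR]

variable [Inhabited P]

open Classical in
/-- The reduction of `[U,o]φ` to modal logic (junk `⊤` on non-modal `φ`); the box case is
`[U,o]□_a φ ↔ ⋀_{(o,χ) →_a (o',χ') ∈ U} (χ → □_a (χ' → [U,o']φ))`. -/
noncomputable def reduceUpd (U : List (Arrow P A)) : Form P A → ℕ → Form P A
  | .atom p, _ => .atom p
  | .neg φ, o => .neg (reduceUpd U φ o)
  | .and φ χ, o => .and (reduceUpd U φ o) (reduceUpd U χ o)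
  | .box a φ, o => Form.conj ((U.filter fun ar => ar.1 = a ∧ ar.2.1 = o).map fun ar =>
      Form.imp ar.2.2.1 (.box a (Form.imp ar.2.2.2.2 (reduceUpd U φ ar.2.2.2.1))))
  | .upd _ _ _, _ => Form.top
  | .all _, _ => Form.top

lemma Form.Modal.modal_reduceUpd (hU : ModalArrows U) (hφ : φ.Modal) (o : ℕ) :
    (reduceUpd U φ o).Modal := by
  induction hφ generalizing o with
  | atom p => exact .atom p
  | neg _ ih => exact .neg (ih o)
  | and _ _ ih₁ ih₂ => exact .and (ih₁ o) (ih₂ o)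
  | box a _ ih =>
    refine Form.modal_conj fun χ hχ => ?_
    obtain ⟨ar, har, rfl⟩ := List.mem_map.mp hχ
    have hU := hU ar (List.mem_of_mem_filter har)
    exact Form.modal_imp hU.1 (.box a (Form.modal_imp hU.2 (ih _)))

lemma Form.Modal.msat_reduceUpd (hφ : φ.Modal) (o : ℕ) (s : M.World) :
    msat M s (reduceUpd U φ o) ↔ msat (mprodModel M U) (s, o) φ := by
  induction hφ generalizing o s with
  | atom p => rfl
  | neg _ ih => simp only [reduceUpd, msat, ih]
  | and _ _ ih₁ ih₂ => simp only [reduceUpd, msat, ih₁, ih₂]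
  | box a _ ih =>
    simp only [reduceUpd, msat_conj, List.forall_mem_map, List.mem_filter, msat_imp,
      decide_eq_true_eq, msat, marrowOK]
    constructor
    · rintro H ⟨t, o'⟩ ⟨hR, χ, χ', hmem, hχ, hχ'⟩
      exact (ih o' t).mp (H _ ⟨hmem, rfl, rfl⟩ hχ t hR hχ')
    · rintro H ⟨b, o₁, χ, o', χ'⟩ ⟨hmem, rfl, rfl⟩ hχ t hR hχ'
      exact (ih o' t).mpr (H (t, o') ⟨hR, χ, χ', hmem, hχ, hχ'⟩)

theorem Form.NoQuant.modallyDefinable (hφ : φ.NoQuant) : ModallyDefinable φ := by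
  induction hφ with
  | atom p => exact ⟨.atom p, .atom p, fun M s => by rw [Form.sat, msat]⟩
  | neg _ ih =>
    obtain ⟨χ, hχ, h⟩ := ih
    exact ⟨.neg χ, .neg hχ, fun M s => by simp [msat, h]⟩
  | and _ _ ih₁ ih₂ =>
    obtain ⟨χ₁, hχ₁, h₁⟩ := ih₁
    obtain ⟨χ₂, hχ₂, h₂⟩ := ih₂
    exact ⟨.and χ₁ χ₂, .and hχ₁ hχ₂, fun M s => by simp [msat, h₁, h₂]⟩
  | box a _ ih =>
    obtain ⟨χ, hχ, h⟩ := ih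
    exact ⟨.box a χ, .box a hχ, fun M s => by simp [msat, h]⟩
  | upd o _ _ _ ih ih₁ ih₂ =>
    obtain ⟨χ, hχ, h⟩ := ih
    obtain ⟨U', hU', hiff⟩ :=
      exists_modalArrows_satList_iff_marrowOK fun ar har => ⟨ih₁ ar har, ih₂ ar har⟩
    refine ⟨reduceUpd U' χ o, hχ.modal_reduceUpd hU' o, fun M s => ?_⟩
    rw [sat_upd_iff_of_satList_iff (hiff M), h, hχ.msat_reduceUpd]

lemma Form.NoQuant.sat_iff_of_isBisim {N : KModel P A} {Z : M.World → N.World → Prop}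
    (hφ : φ.NoQuant) (hZ : IsBisim M N Z) {s : M.World} {s' : N.World} (hs : Z s s') :
    Form.sat M s φ ↔ Form.sat N s' φ := by
  obtain ⟨χ, hχ, h⟩ := hφ.modallyDefinable
  rw [h, h]
  exact hχ.msat_iff_of_isBisim hZ hs

lemma Form.NoQuant.exists_modal_msat_iff_sat_mprodModel (hφ : φ.NoQuant)
    (hU : ModalArrows U) (o : ℕ) : ∃ θ : Form P A, θ.Modal ∧
      ∀ (M : KModel P A) (t : M.World), msat M t θ ↔ Form.sat (mprodModel M U) (t, o) φ := by
  obtain ⟨χ, hχ, h⟩ := hφ.modallyDefinable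
  exact ⟨reduceUpd U χ o, hχ.modal_reduceUpd hU o, fun M t => by rw [hχ.msat_reduceUpd, h]⟩

end Reduction

section Join
variable {M : KModel P A}

lemma isBisim_mprodModel_of_mem_iff {U U' : List (Arrow P A)} (f : ℕ → ℕ)
    (h : ∀ b o₁ χ o₂ χ',
      (b, f o₁, χ, o₂, χ') ∈ U ↔ ∃ o₂', o₂ = f o₂' ∧ (b, o₁, χ, o₂', χ') ∈ U') :
    IsBisim (mprodModel M U) (mprodModel M U') fun x y => x.1 = y.1 ∧ x.2 = f y.2 := by
  rintro ⟨s, _⟩ ⟨_, o⟩ ⟨rfl, h⟩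
  dsimp only at h
  subst h
  refine ⟨fun p => Iff.rfl, ?_, ?_⟩
  · rintro b ⟨t, _⟩ ⟨hR, χ, χ', hmem, hχ, hχ'⟩
    obtain ⟨o', rfl, hmem'⟩ := (h ..).mp hmem
    exact ⟨(t, o'), ⟨hR, χ, χ', hmem', hχ, hχ'⟩, rfl, rfl⟩
  · rintro b ⟨t, o'⟩ ⟨hR, χ, χ', hmem, hχ, hχ'⟩
    exact ⟨(t, f o'), ⟨hR, χ, χ', (h ..).mpr ⟨o', rfl, hmem⟩, hχ, hχ'⟩, rfl, rfl⟩

/-- Outcome `o` of the `i`-th summand of `joinUpd`; outcome `0` is kept for the new root. -/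
def joinOutcome (i o : ℕ) : ℕ := Nat.pair i o + 1

lemma joinOutcome_ne_zero (i o : ℕ) : joinOutcome i o ≠ 0 := Nat.succ_ne_zero _

lemma joinOutcome_inj {i j o o' : ℕ} : joinOutcome i o = joinOutcome j o' ↔ i = j ∧ o = o' := by
  simp [joinOutcome, Nat.pair_eq_pair]

def Arrow.mapOutcome (f : ℕ → ℕ) (ar : Arrow P A) : Arrow P A :=
  (ar.1, f ar.2.1, ar.2.2.1, f ar.2.2.2.1, ar.2.2.2.2)

/-- The witness of the right-to-left direction: the disjoint union of the `U i`, plus a root `0`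
with arrows `(0, ⊤) →_a (o i, θ i)`. -/
def joinUpd [Inhabited P] {n : ℕ} (a : A) (U : Fin n → List (Arrow P A)) (o : Fin n → ℕ)
    (θ : Fin n → Form P A) : List (Arrow P A) :=
  (List.finRange n).map (fun i : Fin n => (a, 0, Form.top, joinOutcome i (o i), θ i)) ++
    (List.finRange n).flatMap fun i => (U i).map (Arrow.mapOutcome (joinOutcome i))

variable [Inhabited P] {n : ℕ} {a : A} {U : Fin n → List (Arrow P A)} {o : Fin n → ℕ}
  {θ : Fin n → Form P A}

lemma mem_joinUpd {ar : Arrow P A} :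
    ar ∈ joinUpd a U o θ ↔ (∃ i : Fin n, ar = (a, 0, Form.top, joinOutcome i (o i), θ i)) ∨
      ∃ i : Fin n, ∃ ar' ∈ U i, ar = ar'.mapOutcome (joinOutcome i) := by
  simp [joinUpd, eq_comm]

lemma modalArrows_joinUpd (hU : ∀ i, ModalArrows (U i)) (hθ : ∀ i, (θ i).Modal) :
    ModalArrows (joinUpd a U o θ) := by
  intro ar har
  rcases mem_joinUpd.mp har with ⟨i, rfl⟩ | ⟨i, ar', har', rfl⟩
  exacts [⟨Form.modal_top, hθ i⟩, hU i ar' har']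

lemma mem_joinUpd_joinOutcome {i : Fin n} {b : A} {o₁ o₂ : ℕ} {χ χ' : Form P A} :
    (b, joinOutcome i o₁, χ, o₂, χ') ∈ joinUpd a U o θ ↔
      ∃ o₂', o₂ = joinOutcome i o₂' ∧ (b, o₁, χ, o₂', χ') ∈ U i := by
  simp [mem_joinUpd, Arrow.mapOutcome, joinOutcome_inj, joinOutcome_ne_zero, Fin.val_inj,
    and_comm]

lemma mprodModel_joinUpd_R_zero {b : A} {s t : M.World} {o' : ℕ} :
    (mprodModel M (joinUpd a U o θ)).R b (s, 0) (t, o') ↔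
      M.R b s t ∧ ∃ i : Fin n, b = a ∧ o' = joinOutcome i (o i) ∧ msat M t (θ i) := by
  simp [marrowOK, mem_joinUpd, Arrow.mapOutcome, fun i o => (joinOutcome_ne_zero i o).symm,
    and_assoc]

lemma sat_joinUpd_joinOutcome {φ : Form P A} (hφ : φ.NoQuant) (i : Fin n) (t : M.World)
    (o' : ℕ) : Form.sat (mprodModel M (joinUpd a U o θ)) (t, joinOutcome i o') φ ↔
      Form.sat (mprodModel M (U i)) (t, o') φ :=
  hφ.sat_iff_of_isBisim
    (isBisim_mprodModel_of_mem_iff _ fun _ _ _ _ _ => mem_joinUpd_joinOutcome) ⟨rfl, rfl⟩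

end Join

section Main
variable {P A : Type} [Inhabited P] {M : KModel P A} {s : M.World} {a : A}
  {φs : List (Form P A)} {ψ : Form P A}

lemma forall_sat_dia_ex_of_sat_ex
    (H : Form.sat M s (Form.ex (.and (Form.conj (φs.map (Form.dia a))) (.box a ψ)))) :
    ∀ φ ∈ φs, Form.sat M s (Form.dia a (Form.ex (.and φ ψ))) := by
  obtain ⟨U, o, hU, hconj, hbox⟩ := by simpa only [sat_ex, sat_and] using H
  intro φ hφ
  obtain ⟨t, hR, ht⟩ := sat_dia.mp (sat_conj.mp hconj _ (List.mem_map_of_mem hφ))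
  exact sat_dia.mpr ⟨t.1, hR.1, sat_ex.mpr ⟨U, t.2, hU, sat_and.mpr ⟨ht, sat_box.mp hbox t hR⟩⟩⟩

lemma sat_ex_of_forall_sat_dia_ex (hφ : ∀ φ ∈ φs, φ.NoQuant) (hψ : ψ.NoQuant)
    (H : ∀ φ ∈ φs, Form.sat M s (Form.dia a (Form.ex (.and φ ψ)))) :
    Form.sat M s (Form.ex (.and (Form.conj (φs.map (Form.dia a))) (.box a ψ))) := by
  have hwit : ∀ i : Fin φs.length, ∃ t U o θ, M.R a s t ∧ ModalArrows U ∧ θ.Modal ∧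
      msat M t θ ∧ ∀ w, msat M w θ ↔ Form.sat (mprodModel M U) (w, o) (.and (φs.get i) ψ) := by
    intro i
    obtain ⟨t, hR, U, o, hU, ht⟩ := by simpa only [sat_dia, sat_ex] using H _ (φs.get_mem i)
    obtain ⟨θ, hθ, hθiff⟩ :=
      (Form.NoQuant.and (hφ _ (φs.get_mem i)) hψ).exists_modal_msat_iff_sat_mprodModel hU o
    exact ⟨t, U, o, θ, hR, hU, hθ, (hθiff M t).mpr ht, hθiff M⟩
  choose t U o θ hR hU hθ hθt hθiff using hwit
  refine sat_ex.mpr ⟨joinUpd a U o θ, 0, modalArrows_joinUpd hU hθ, ?_⟩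
  simp only [sat_and, sat_conj, List.forall_mem_map, sat_dia, sat_box]
  refine ⟨fun φ hmem => ?_, ?_⟩
  · obtain ⟨i, rfl⟩ := List.mem_iff_get.mp hmem
    refine ⟨(t i, joinOutcome i (o i)),
      mprodModel_joinUpd_R_zero.mpr ⟨hR i, i, rfl, rfl, hθt i⟩, ?_⟩
    rw [sat_joinUpd_joinOutcome (hφ _ hmem)]
    exact (sat_and.mp ((hθiff i (t i)).mp (hθt i))).1
  · rintro ⟨w, o'⟩ hR'
    obtain ⟨-, i, -, rfl, hw⟩ := mprodModel_joinUpd_R_zero.mp hR'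
    rw [sat_joinUpd_joinOutcome hψ]
    exact (sat_and.mp ((hθiff i w).mp hw)).2

end Main

/-- for formulas `φ₁,…,φₙ,ψ` of arrow update model logic,
`⟨↑⟩(⋀ᵢ ◇_a φᵢ ∧ □_a ψ) ↔ ⋀ᵢ ◇_a⟨↑⟩(φᵢ ∧ ψ)` is valid. -/
theorem ex_conj_dia_box (P A : Type) [Inhabited P] (a : A)
    (φs : List (Form P A)) (ψ : Form P A)
    (hφ : ∀ φ ∈ φs, φ.NoQuant) (hψ : ψ.NoQuant) :
    ∀ (M : KModel P A) (s : M.World),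
      Form.sat M s (Form.ex (.and (Form.conj (φs.map (Form.dia a))) (.box a ψ))) ↔
        Form.sat M s (Form.conj (φs.map (fun φ => Form.dia a (Form.ex (.and φ ψ))))) := by
  intro M s
  rw [sat_conj, List.forall_mem_map]
  exact ⟨forall_sat_dia_ex_of_sat_ex, sat_ex_of_forall_sat_dia_ex hφ hψ⟩

end AAUML
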